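/- arXiv:1511.04087 — 2 statements merged into one kernel-verified Lean document; each statement's English description precedes it below -/
import Mathlib

section
/- Let (X,Y,Z,W) be a solution of (★) on (−∞, t_max) such that: (i) Y(t) > 0 and W(t) > 0 for all t; (ii) (X,Y,Z,W)(t) → (0,0,1,0) as t → −∞; and (iii) the first integral equation holds with a constant 𝓒 > 0, where 𝓛 = g·Y and g(t) = λ·exp(∫_{−∞}^{t} X(τ)dτ) for some λ > 0 (X being integrable at −∞). Then the limit lim_{t→−∞} (1 − Z(t))/Y(t)² exists and 𝓒λ² = 2·lim_{t→−∞} (1 − Z(t))/Y(t)² − A₂. -/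
open Filter Topology MeasureTheory

/-- `A₂ = d(d+2)`. -/
noncomputable def A2 (d : ℕ) : ℝ := (d : ℝ) * ((d : ℝ) + 2)

/-- `A₃ = (1/4)·d·(d+2)²·q²`. -/
noncomputable def A3 (d : ℕ) (q : ℝ) : ℝ := (1/4) * (d : ℝ) * ((d : ℝ) + 2)^2 * q^2

/-- `(X,Y,Z,W)` solves the nonlinear system (★) on the set `s`. -/
def StarSystem (d : ℕ) (q : ℝ) (X Y Z W : ℝ → ℝ) (s : Set ℝ) : Prop :=
  ∀ t ∈ s,
    HasDerivAt X
      (X t * ((d : ℝ) * X t^2 + Z t^2 - 1) + (A2 d / (d : ℝ)) * Y t^2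
        - (2 * A3 d q / (d : ℝ)) * W t^2) t ∧
    HasDerivAt Y (Y t * ((d : ℝ) * X t^2 + Z t^2 - X t)) t ∧
    HasDerivAt Z (Z t * ((d : ℝ) * X t^2 + Z t^2 - 1) + A3 d q * W t^2) t ∧
    HasDerivAt W (W t * ((d : ℝ) * X t^2 + Z t^2 - 2*X t + Z t)) t


/-!
By the first integral, `1 - Z² = d X² + A₂ Y² - A₃ W² + 𝓒 g² Y²`, so `(1 - Z) / Y²` tends to
`(A₂ + 𝓒 λ²) / 2` as soon as `X / Y → 0` and `W / Y → 0` (and `g → λ` because `∫_{-∞}^t X → 0`).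

Near `-∞` the logarithmic derivatives of `Y` and of `W / Y` tend to `1`, so both decay
exponentially. The first integral then makes `Q = d X² + Z² - 1` exponentially small, hence
`E = Y exp(∫_{-∞}^t X - t)`, whose logarithmic derivative is `Q`, stays away from `0`.
Consequently `X / E → 0`, and its derivative `(A₂ Y² - 2 A₃ W²) / (d E)` is `O(e^{3t/2})`, so
`X / E = O(e^{3t/2})` and `X / Y = (X / E) exp(∫_{-∞}^t X - t) = O(e^{t/2})`.
-/

open Real Set Asymptotics

section Comparison

variable {f f' a G g : ℝ → ℝ} {b : ℝ}

theorem monotoneOn_Iic_of_hasDerivAt_nonneg (hf : ∀ x ≤ b, HasDerivAt f (f' x) x)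
    (hf' : ∀ x < b, 0 ≤ f' x) : MonotoneOn f (Iic b) :=
  monotoneOn_of_hasDerivWithinAt_nonneg (convex_Iic b)
    (fun x hx => (hf x hx).continuousAt.continuousWithinAt)
    (fun x hx => by
      rw [interior_Iic] at hx ⊢
      exact (hf x (le_of_lt hx)).hasDerivWithinAt)
    (fun x hx => by
      rw [interior_Iic] at hx
      exact hf' x hx)

theorem nonneg_of_monotoneOn_Iic_of_tendsto_atBot (hf : MonotoneOn f (Iic b))
    (hlim : Tendsto f atBot (𝓝 0)) {t : ℝ} (ht : t ≤ b) : 0 ≤ f t :=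
  le_of_tendsto hlim <| by
    filter_upwards [Iic_mem_atBot t] with s hs
    exact hf (le_trans hs ht) ht hs

theorem monotoneOn_mul_exp_neg (hf : ∀ x ≤ b, HasDerivAt f (f x * a x) x)
    (hG : ∀ x ≤ b, HasDerivAt G (g x) x) (h : ∀ x < b, 0 ≤ f x * (a x - g x)) :
    MonotoneOn (fun x => f x * exp (-G x)) (Iic b) :=
  monotoneOn_Iic_of_hasDerivAt_nonneg (fun x hx => (hf x hx).mul (hG x hx).fun_neg.exp)
    fun x hx => by
      have := mul_nonneg (h x hx) (exp_pos (-G x)).le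
      linarith

theorem hasDerivAt_div_mul_exp {K c : ℝ} (hc : c ≠ 0) (x : ℝ) :
    HasDerivAt (fun x => K / c * exp (c * x)) (K * exp (c * x)) x :=
  (((hasDerivAt_id x).const_mul c).exp.const_mul (K / c)).congr_deriv (by field_simp; simp)

theorem tendsto_exp_mul_atBot {r : ℝ} (hr : 0 < r) :
    Tendsto (fun t => exp (r * t)) atBot (𝓝 0) :=
  tendsto_exp_comp_nhds_zero.2 (tendsto_id.const_mul_atBot hr)

theorem isBigO_sq_exp {r : ℝ} (hf : f =O[atBot] fun t => exp (r * t)) :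
    (fun t => f t ^ 2) =O[atBot] fun t => exp (2 * r * t) :=
  (hf.pow 2).congr_right fun t => by rw [← exp_nat_mul]; push_cast; ring_nf

theorem isBigO_exp_of_hasDerivAt_mul {c r : ℝ} (hf : ∀ᶠ x in atBot, HasDerivAt f (f x * a x) x)
    (hpos : ∀ᶠ x in atBot, 0 < f x) (ha : Tendsto a atBot (𝓝 c)) (hr : r < c) :
    f =O[atBot] fun t => exp (r * t) := by
  obtain ⟨b, hb⟩ := eventually_atBot.mp (hf.and (hpos.and (ha.eventually_const_lt hr)))
  have hmono : MonotoneOn (fun x => f x * exp (-(r * x))) (Iic b) :=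
    monotoneOn_mul_exp_neg (fun x hx => (hb x hx).1)
      (fun x _ => by simpa using (hasDerivAt_id x).const_mul r)
      (fun x hx => mul_nonneg (hb x hx.le).2.1.le (by linarith [(hb x hx.le).2.2]))
  refine IsBigO.of_bound (f b * exp (-(r * b))) ?_
  filter_upwards [Iic_mem_atBot b] with t ht
  rw [norm_of_nonneg (hb t ht).2.1.le, norm_of_nonneg (exp_pos _).le]
  calc f t = f t * exp (-(r * t)) * exp (r * t) := by rw [mul_assoc, ← exp_add]; simp
    _ ≤ f b * exp (-(r * b)) * exp (r * t) :=
      mul_le_mul_of_nonneg_right (hmono ht self_mem_Iic ht) (exp_pos _).le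

theorem isBigO_inv_one_of_hasDerivAt_mul {c : ℝ} (hc : 0 < c)
    (hf : ∀ᶠ x in atBot, HasDerivAt f (f x * a x) x) (hpos : ∀ᶠ x in atBot, 0 < f x)
    (ha : a =O[atBot] fun t => exp (c * t)) :
    (fun t => (f t)⁻¹) =O[atBot] fun _ => (1 : ℝ) := by
  obtain ⟨M, hM, hMa⟩ := ha.exists_pos
  obtain ⟨b, hb⟩ := eventually_atBot.mp (hf.and (hpos.and hMa.bound))
  set G : ℝ → ℝ := fun x => M / c * exp (c * x)
  -- `-f` solves the same linear equation, and `a ≤ M e^{c x}` becomes the sign condition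
  have hmono : MonotoneOn (fun x => -f x * exp (-G x)) (Iic b) :=
    monotoneOn_mul_exp_neg (f := fun x => -f x) (fun x hx => by simpa using (hb x hx).1.fun_neg)
      (fun x _ => hasDerivAt_div_mul_exp hc.ne' x) fun x hx => by
        obtain ⟨-, hfx, hax⟩ := hb x hx.le
        rw [norm_of_nonneg (exp_pos _).le, Real.norm_eq_abs] at hax
        nlinarith [le_abs_self (a x)]
  refine IsBigO.of_bound (exp (G b) / f b) ?_
  filter_upwards [Iic_mem_atBot b] with t ht
  have hft := (hb t ht).2.1
  have hlower : f b * exp (-G b) ≤ f t :=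
    calc f b * exp (-G b) ≤ f t * exp (-G t) := by simpa using hmono ht self_mem_Iic ht
      _ ≤ f t := mul_le_of_le_one_right hft.le (exp_le_one_iff.2 (neg_nonpos.2 (by positivity)))
  rw [norm_inv, norm_of_nonneg hft.le, norm_one, mul_one,
    inv_le_comm₀ hft (div_pos (exp_pos _) (hb b le_rfl).2.1), inv_div, div_eq_mul_inv, ← exp_neg]
  exact hlower

theorem isBigO_exp_of_hasDerivAt_of_tendsto {φ ψ : ℝ → ℝ} {c : ℝ} (hc : 0 < c)
    (hφ : ∀ᶠ x in atBot, HasDerivAt φ (ψ x) x) (hlim : Tendsto φ atBot (𝓝 0))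
    (hψ : ψ =O[atBot] fun t => exp (c * t)) : φ =O[atBot] fun t => exp (c * t) := by
  obtain ⟨K, hK, hKψ⟩ := hψ.exists_pos
  obtain ⟨b, hb⟩ := eventually_atBot.mp (hφ.and hKψ.bound)
  set G : ℝ → ℝ := fun x => K / c * exp (c * x)
  have hG : ∀ x, HasDerivAt G (K * exp (c * x)) x := hasDerivAt_div_mul_exp hc.ne'
  have hGlim : Tendsto G atBot (𝓝 0) := by
    simpa using (tendsto_exp_mul_atBot hc).const_mul (K / c)
  have hψb : ∀ x ≤ b, |ψ x| ≤ K * exp (c * x) := fun x hx => by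
    simpa [norm_of_nonneg (exp_pos _).le] using (hb x hx).2
  have hplus := monotoneOn_Iic_of_hasDerivAt_nonneg (fun x hx => (hG x).fun_add (hb x hx).1)
    fun x hx => by linarith [neg_abs_le (ψ x), hψb x hx.le]
  have hminus := monotoneOn_Iic_of_hasDerivAt_nonneg (fun x hx => (hG x).fun_sub (hb x hx).1)
    fun x hx => by linarith [le_abs_self (ψ x), hψb x hx.le]
  refine IsBigO.of_bound (K / c) ?_
  filter_upwards [Iic_mem_atBot b] with t ht
  have h1 := nonneg_of_monotoneOn_Iic_of_tendsto_atBot hplus (by simpa using hGlim.add hlim) ht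
  have h2 := nonneg_of_monotoneOn_Iic_of_tendsto_atBot hminus (by simpa using hGlim.sub hlim) ht
  rw [Real.norm_eq_abs, norm_of_nonneg (exp_pos _).le, abs_le]
  constructor <;> simp only [G] at h1 h2 <;> linarith

end Comparison

theorem hasDerivAt_integral_Iic {f : ℝ → ℝ} {b t : ℝ} (hint : IntegrableOn f (Iic b))
    (ht : t < b) (hf : ContinuousAt f t) :
    HasDerivAt (fun s => ∫ x in Iic s, f x) (f t) t := by
  have hmeas : StronglyMeasurableAtFilter f (𝓝 t) :=
    ⟨Iic b, Iic_mem_nhds ht, hint.aestronglyMeasurable⟩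
  have hsub : uIcc (t - 1) t ⊆ Iic b := by
    rw [uIcc_of_le (by linarith)]
    exact Icc_subset_Iic_self.trans (Iic_subset_Iic.2 ht.le)
  have hii : IntervalIntegrable f volume (t - 1) t := (hint.mono_set hsub).intervalIntegrable
  refine ((intervalIntegral.integral_hasDerivAt_right hii hmeas hf).const_add
    (∫ x in Iic (t - 1), f x)).congr_of_eventuallyEq ?_
  filter_upwards [Iio_mem_nhds ht] with s hs
  rw [← intervalIntegral.integral_Iic_sub_Iic (hint.mono_set (Iic_subset_Iic.2 (by linarith)))
    (hint.mono_set (Iic_subset_Iic.2 hs.le))]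
  ring

theorem isBigO_of_firstIntegral {δ a₂ a₃ C lam r : ℝ} {g X Y Z W : ℝ → ℝ}
    (hg : Tendsto g atBot (𝓝 lam)) (hYO : Y =O[atBot] fun t => exp (r * t))
    (hWO : W =O[atBot] fun t => exp (r * t))
    (hfirst : ∀ᶠ t in atBot,
      δ * X t ^ 2 + a₂ * Y t ^ 2 + Z t ^ 2 - a₃ * W t ^ 2 = 1 - C * (g t * Y t) ^ 2) :
    (fun t => δ * X t ^ 2 + Z t ^ 2 - 1) =O[atBot] fun t => exp (2 * r * t) := by
  have hcoef : (fun t => a₂ + C * g t ^ 2) =O[atBot] fun _ => (1 : ℝ) :=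
    (tendsto_const_nhds.add ((hg.pow 2).const_mul C)).isBigO_one ℝ
  have hYsq := (hcoef.mul (isBigO_sq_exp hYO)).congr_right fun t => one_mul _
  refine (((isBigO_sq_exp hWO).const_mul_left a₃).sub hYsq).congr' ?_ EventuallyEq.rfl
  filter_upwards [hfirst] with t ht
  linear_combination -ht

theorem tendsto_one_sub_div_sq_of_firstIntegral {δ a₂ a₃ C lam : ℝ} {g X Y Z W : ℝ → ℝ}
    (hu : Tendsto (fun t => X t / Y t) atBot (𝓝 0))
    (hv : Tendsto (fun t => W t / Y t) atBot (𝓝 0)) (hg : Tendsto g atBot (𝓝 lam))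
    (hZ : Tendsto Z atBot (𝓝 1)) (hY : ∀ᶠ t in atBot, 0 < Y t)
    (hfirst : ∀ᶠ t in atBot,
      δ * X t ^ 2 + a₂ * Y t ^ 2 + Z t ^ 2 - a₃ * W t ^ 2 = 1 - C * (g t * Y t) ^ 2) :
    Tendsto (fun t => (1 - Z t) / Y t ^ 2) atBot (𝓝 ((a₂ + C * lam ^ 2) / 2)) := by
  have hnum := ((((hu.pow 2).const_mul δ).const_add a₂).sub ((hv.pow 2).const_mul a₃)).add
    ((hg.pow 2).const_mul C)
  have hlim := hnum.div ((tendsto_const_nhds (x := (1 : ℝ))).add hZ) (by norm_num)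
  norm_num at hlim
  refine hlim.congr' ?_
  filter_upwards [hY, hfirst, hZ.eventually_const_lt (show (-1 : ℝ) < 1 by norm_num)]
    with t hYt ht hZt
  rw [Pi.div_apply, div_eq_div_iff (by linarith) (by positivity)]
  field_simp
  linear_combination ht

namespace StarSystem

variable {d : ℕ} {q : ℝ} {X Y Z W : ℝ → ℝ} {s : Set ℝ}

theorem hasDerivAt_W_div_Y {t : ℝ} (h : StarSystem d q X Y Z W s) (ht : t ∈ s) (hY : Y t ≠ 0) :
    HasDerivAt (fun t => W t / Y t) (W t / Y t * (Z t - X t)) t :=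
  ((h t ht).2.2.2.div (h t ht).2.1 hY).congr_deriv (by field_simp; ring)

theorem hasDerivAt_Y_mul_exp {F : ℝ → ℝ} {t : ℝ} (h : StarSystem d q X Y Z W s) (ht : t ∈ s)
    (hF : HasDerivAt F (X t) t) :
    HasDerivAt (fun t => Y t * exp (F t - t))
      (Y t * exp (F t - t) * ((d : ℝ) * X t ^ 2 + Z t ^ 2 - 1)) t :=
  ((h t ht).2.1.mul (hF.fun_sub (hasDerivAt_id' t)).exp).congr_deriv (by ring)

theorem hasDerivAt_X_div {E : ℝ → ℝ} {t : ℝ} (h : StarSystem d q X Y Z W s) (ht : t ∈ s)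
    (hE : HasDerivAt E (E t * ((d : ℝ) * X t ^ 2 + Z t ^ 2 - 1)) t) (hE0 : E t ≠ 0) :
    HasDerivAt (fun t => X t / E t)
      ((A2 d / d * Y t ^ 2 - 2 * A3 d q / d * W t ^ 2) / E t) t :=
  ((h t ht).1.div hE hE0).congr_deriv (by field_simp; ring)

theorem isBigO_Y (h : StarSystem d q X Y Z W s) (hs : ∀ᶠ t in atBot, t ∈ s)
    (hY : ∀ᶠ t in atBot, 0 < Y t) (hX : Tendsto X atBot (𝓝 0)) (hZ : Tendsto Z atBot (𝓝 1)) :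
    Y =O[atBot] fun t => exp (3 / 4 * t) := by
  have ha : Tendsto (fun t => (d : ℝ) * X t ^ 2 + Z t ^ 2 - X t) atBot (𝓝 1) := by
    simpa using (((hX.pow 2).const_mul (d : ℝ)).add (hZ.pow 2)).sub hX
  exact isBigO_exp_of_hasDerivAt_mul (hs.mono fun t ht => (h t ht).2.1) hY ha (by norm_num)

theorem tendsto_W_div_Y (h : StarSystem d q X Y Z W s) (hs : ∀ᶠ t in atBot, t ∈ s)
    (hY : ∀ᶠ t in atBot, 0 < Y t) (hW : ∀ᶠ t in atBot, 0 < W t) (hX : Tendsto X atBot (𝓝 0))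
    (hZ : Tendsto Z atBot (𝓝 1)) : Tendsto (fun t => W t / Y t) atBot (𝓝 0) := by
  have ha : Tendsto (fun t => Z t - X t) atBot (𝓝 1) := by simpa using hZ.sub hX
  have hderiv : ∀ᶠ t in atBot, HasDerivAt (fun t => W t / Y t) (W t / Y t * (Z t - X t)) t := by
    filter_upwards [hs, hY] with t ht hYt using h.hasDerivAt_W_div_Y ht hYt.ne'
  have hpos : ∀ᶠ t in atBot, 0 < W t / Y t := by
    filter_upwards [hY, hW] with t hYt hWt using div_pos hWt hYt
  exact (isBigO_exp_of_hasDerivAt_mul (r := 1 / 2) hderiv hpos ha (by norm_num)).trans_tendsto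
    (tendsto_exp_mul_atBot (by norm_num))

theorem tendsto_X_div_Y {C lam : ℝ} {F : ℝ → ℝ} (h : StarSystem d q X Y Z W s)
    (hs : ∀ᶠ t in atBot, t ∈ s) (hY : ∀ᶠ t in atBot, 0 < Y t) (hW : ∀ᶠ t in atBot, 0 < W t)
    (hX : Tendsto X atBot (𝓝 0)) (hZ : Tendsto Z atBot (𝓝 1))
    (hF : ∀ᶠ t in atBot, HasDerivAt F (X t) t) (hFlim : Tendsto F atBot (𝓝 0))
    (hfirst : ∀ᶠ t in atBot, (d : ℝ) * X t ^ 2 + A2 d * Y t ^ 2 + Z t ^ 2 - A3 d q * W t ^ 2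
      = 1 - C * (lam * exp (F t) * Y t) ^ 2) :
    Tendsto (fun t => X t / Y t) atBot (𝓝 0) := by
  have hexpF : Tendsto (fun t => exp (F t)) atBot (𝓝 1) := by simpa using hFlim.rexp
  have hYO := h.isBigO_Y hs hY hX hZ
  have hWO : W =O[atBot] fun t => exp (3 / 4 * t) := by
    refine (((h.tendsto_W_div_Y hs hY hW hX hZ).isBigO_one ℝ).mul hYO).congr' ?_ (by simp)
    filter_upwards [hY] with t ht
    field_simp
  have hQ := isBigO_of_firstIntegral (hexpF.const_mul lam) hYO hWO hfirst
  set E : ℝ → ℝ := fun t => Y t * exp (F t - t)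
  have hEpos : ∀ᶠ t in atBot, 0 < E t := by
    filter_upwards [hY] with t ht using mul_pos ht (exp_pos _)
  have hE : ∀ᶠ t in atBot, HasDerivAt E (E t * ((d : ℝ) * X t ^ 2 + Z t ^ 2 - 1)) t := by
    filter_upwards [hs, hF] with t ht hFt using h.hasDerivAt_Y_mul_exp ht hFt
  have hEinv : (fun t => (E t)⁻¹) =O[atBot] fun _ => (1 : ℝ) :=
    isBigO_inv_one_of_hasDerivAt_mul (by norm_num) hE hEpos hQ
  have hψ : (fun t => (A2 d / d * Y t ^ 2 - 2 * A3 d q / d * W t ^ 2) / E t)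
      =O[atBot] fun t => exp (3 / 2 * t) := by
    have := (((isBigO_sq_exp hYO).const_mul_left (A2 d / d)).sub
      ((isBigO_sq_exp hWO).const_mul_left (2 * A3 d q / d))).mul hEinv
    refine this.congr (fun t => (div_eq_mul_inv _ _).symm) fun t => ?_
    norm_num
  have hφlim : Tendsto (fun t => X t / E t) atBot (𝓝 0) :=
    (((isBigO_refl X atBot).mul hEinv).congr (fun t => (div_eq_mul_inv _ _).symm)
      fun t => mul_one _).trans_tendsto hX
  have hφ : (fun t => X t / E t) =O[atBot] fun t => exp (3 / 2 * t) := by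
    refine isBigO_exp_of_hasDerivAt_of_tendsto (by norm_num) ?_ hφlim hψ
    filter_upwards [hs, hE, hEpos] with t ht hEt hEt0 using h.hasDerivAt_X_div ht hEt hEt0.ne'
  have hXY : (fun t => X t / Y t) =O[atBot] fun t => exp (1 / 2 * t) := by
    refine ((hφ.mul (hexpF.isBigO_one ℝ)).mul (isBigO_refl (fun t => exp (-t)) atBot)).congr'
      ?_ (Eventually.of_forall fun t => ?_)
    · filter_upwards [hY] with t ht
      simp only [E, sub_eq_add_neg, exp_add]
      field_simp
    · simp only [mul_one, ← exp_add]
      ring_nf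
  exact hXY.trans_tendsto (tendsto_exp_mul_atBot (by norm_num))

end StarSystem

theorem stmt13_general (d : ℕ) (q : ℝ) (tmax : ℝ) (X Y Z W : ℝ → ℝ)
    (hode : StarSystem d q X Y Z W (Set.Iio tmax))
    (hY : ∀ t < tmax, 0 < Y t) (hW : ∀ t < tmax, 0 < W t)
    (hlimX : Tendsto X atBot (𝓝 0))
    (hlimZ : Tendsto Z atBot (𝓝 1))
    (lam : ℝ)
    (hint : ∀ t < tmax, IntegrableOn X (Set.Iic t))
    (C : ℝ)
    (hfirst : ∀ t < tmax,
      (d : ℝ) * X t^2 + A2 d * Y t^2 + Z t^2 - A3 d q * W t^2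
        = 1 - C * (lam * Real.exp (∫ τ in Set.Iic t, X τ) * Y t)^2) :
    ∃ l : ℝ, Tendsto (fun t => (1 - Z t) / Y t^2) atBot (𝓝 l) ∧
      C * lam^2 = 2 * l - A2 d := by
  set F : ℝ → ℝ := fun t => ∫ τ in Iic t, X τ
  have hs : ∀ᶠ t in atBot, t ∈ Iio tmax := eventually_lt_atBot tmax
  have hF : ∀ᶠ t in atBot, HasDerivAt F (X t) t := by
    filter_upwards [eventually_lt_atBot (tmax - 1)] with t ht
    exact hasDerivAt_integral_Iic (hint _ (by linarith)) ht
      (hode t (by simp only [mem_Iio]; linarith)).1.continuousAt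
  have hFlim : Tendsto F atBot (𝓝 0) := tendsto_integral_Iic_zero tendsto_id
  have hY' : ∀ᶠ t in atBot, 0 < Y t := hs.mono hY
  have hW' : ∀ᶠ t in atBot, 0 < W t := hs.mono hW
  have hfirst' := hs.mono hfirst
  refine ⟨(A2 d + C * lam ^ 2) / 2, ?_, by ring⟩
  exact tendsto_one_sub_div_sq_of_firstIntegral
    (hode.tendsto_X_div_Y hs hY' hW' hlimX hlimZ hF hFlim hfirst')
    (hode.tendsto_W_div_Y hs hY' hW' hlimX hlimZ) (by simpa using hFlim.rexp.const_mul lam)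
    hlimZ hY' hfirst'

/-- If `(X,Y,Z,W)` solves (★) on `(−∞, t_max)` with `Y, W > 0`, limit `(0,0,1,0)` at
`−∞`, and first integral constant `𝓒 > 0` (with `𝓛 = g·Y`, `g(t) = λ·exp(∫_{−∞}^t X)`,
`λ > 0`), then `lim_{t→−∞} (1−Z)/Y²` exists and `𝓒λ² = 2·lim_{t→−∞}(1−Z)/Y² − A₂`. -/
theorem stmt13 (d : ℕ) (hd : 2 ≤ d) (q : ℝ) (tmax : ℝ) (X Y Z W : ℝ → ℝ)
    (hode : StarSystem d q X Y Z W (Set.Iio tmax))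
    (hY : ∀ t < tmax, 0 < Y t) (hW : ∀ t < tmax, 0 < W t)
    (hlimX : Tendsto X atBot (𝓝 0)) (hlimY : Tendsto Y atBot (𝓝 0))
    (hlimZ : Tendsto Z atBot (𝓝 1)) (hlimW : Tendsto W atBot (𝓝 0))
    (lam : ℝ) (hlam : 0 < lam)
    (hint : ∀ t < tmax, IntegrableOn X (Set.Iic t))
    (C : ℝ) (hC : 0 < C)
    (hfirst : ∀ t < tmax,
      (d : ℝ) * X t^2 + A2 d * Y t^2 + Z t^2 - A3 d q * W t^2
        = 1 - C * (lam * Real.exp (∫ τ in Set.Iic t, X τ) * Y t)^2) :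
    ∃ l : ℝ, Tendsto (fun t => (1 - Z t) / Y t^2) atBot (𝓝 l) ∧
      C * lam^2 = 2 * l - A2 d :=
  stmt13_general d q tmax X Y Z W hode hY hW hlimX hlimZ lam hint C hfirst
end

section
/- Let (X,Y,Z,W) be a solution of (★) on (−∞, t_max) such that: (i) Y(t) > 0 and W(t) > 0 for all t; (ii) (X,Y,Z,W)(t) → (0,0,1,0) as t → −∞; and (iii) the first integral equation holds with a constant 𝓒 > 0. Then d·X(t) + Z(t) ≤ 1 for all t ∈ (−∞, t_max). -/
/-!
Along (★) the first integral turns the equation for `u = 1 - (dX + Z)` into the linear equation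
`u' = 𝓒𝓛² - (1 - dX² - Z²) u`, whose forcing term is nonnegative, so `u · exp ∫ (1 - dX² - Z²)`
is nondecreasing. The integrand is at least `-A₃W²` and `W²` decays exponentially at `-∞`, so the
integrating factor stays bounded above there. Hence `u(t₁) < 0` would keep `u` below a fixed
negative constant on `(-∞, t₁]`, contradicting `u → 0`.
-/

open Filter Topology MeasureTheory

open Real Set

lemma monotoneOn_of_hasDerivAt_nonneg {D : Set ℝ} (hD : Convex ℝ D) {f f' : ℝ → ℝ}
    (hf : ∀ t ∈ D, HasDerivAt f (f' t) t) (hf' : ∀ t ∈ D, 0 ≤ f' t) : MonotoneOn f D :=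
  monotoneOn_of_hasDerivWithinAt_nonneg hD (fun t ht => (hf t ht).continuousAt.continuousWithinAt)
    (fun t ht => (hf t (interior_subset ht)).hasDerivWithinAt)
    (fun t ht => hf' t (interior_subset ht))

lemma hasDerivAt_integral_of_continuousOn_Iio {a : ℝ → ℝ} {b c t : ℝ}
    (ha : ContinuousOn a (Iio b)) (hc : c < b) (ht : t < b) :
    HasDerivAt (fun r => ∫ s in c..r, a s) (a t) t :=
  intervalIntegral.integral_hasDerivAt_right
    ((ha.mono fun _ hs => hs.2.trans_lt (max_lt hc ht)).intervalIntegrable)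
    (ha.stronglyMeasurableAtFilter isOpen_Iio t ht) (ha.continuousAt (Iio_mem_nhds ht))

lemma monotoneOn_mul_exp_integral {u a f : ℝ → ℝ} {b c : ℝ} (ha : ContinuousOn a (Iio b))
    (hc : c < b) (hu : ∀ t < b, HasDerivAt u (f t - a t * u t) t) (hf : ∀ t < b, 0 ≤ f t) :
    MonotoneOn (fun t => u t * exp (∫ s in c..t, a s)) (Iio b) := by
  refine monotoneOn_of_hasDerivAt_nonneg (convex_Iio b)
    (f' := fun t => exp (∫ s in c..t, a s) * f t) (fun t ht => ?_)
    (fun t ht => mul_nonneg (exp_pos _).le (hf t ht))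
  exact ((hu t ht).mul (hasDerivAt_integral_of_continuousOn_Iio ha hc ht).exp).congr_deriv
    (by ring)

lemma le_mul_exp_neg_of_mul_exp_le {x y B c : ℝ} (h : x * exp y ≤ c) (hc : c < 0)
    (hy : y ≤ B) : x ≤ c * exp (-B) := by
  have hx : x < 0 := by
    by_contra! hx
    nlinarith [mul_nonneg hx (exp_pos y).le]
  rw [exp_neg, ← div_eq_mul_inv, le_div_iff₀ (exp_pos B)]
  calc x * exp B ≤ x * exp y := mul_le_mul_of_nonpos_left (exp_le_exp.2 hy) hx.le
    _ ≤ c := h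

namespace StarSystem

variable {d : ℕ} {q : ℝ} {X Y Z W : ℝ → ℝ} {s : Set ℝ}

lemma continuousOn_one_sub_dX_sq_add_Z_sq (hode : StarSystem d q X Y Z W s) :
    ContinuousOn (fun t => 1 - ((d : ℝ) * X t^2 + Z t^2)) s := by
  have hX : ContinuousOn X s := fun t ht => (hode t ht).1.continuousAt.continuousWithinAt
  have hZ : ContinuousOn Z s := fun t ht => (hode t ht).2.2.1.continuousAt.continuousWithinAt
  fun_prop

lemma hasDerivAt_one_sub_dX_add_Z (hode : StarSystem d q X Y Z W s) (hd : d ≠ 0) {t C L : ℝ}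
    (ht : t ∈ s)
    (hfirst : (d : ℝ) * X t^2 + A2 d * Y t^2 + Z t^2 - A3 d q * W t^2 = 1 - C * L^2) :
    HasDerivAt (fun r => 1 - ((d : ℝ) * X r + Z r))
      (C * L^2 - (1 - ((d : ℝ) * X t^2 + Z t^2)) * (1 - ((d : ℝ) * X t + Z t))) t := by
  obtain ⟨hX, -, hZ, -⟩ := hode t ht
  refine ((hasDerivAt_const t 1).sub ((hX.const_mul (d : ℝ)).add hZ)).congr_deriv ?_
  have hd' : (d : ℝ) ≠ 0 := Nat.cast_ne_zero.2 hd
  field_simp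
  linear_combination -hfirst

/-- The right-hand side is `(W²)'` along (★). -/
lemma eventually_sq_le_deriv_sq_W (hX : Tendsto X atBot (𝓝 0)) (hZ : Tendsto Z atBot (𝓝 1)) :
    ∀ᶠ t in atBot, W t^2 ≤ 2 * W t * (W t * ((d : ℝ) * X t^2 + Z t^2 - 2 * X t + Z t)) := by
  have hlim : Tendsto (fun t => (d : ℝ) * X t^2 + Z t^2 - 2 * X t + Z t) atBot (𝓝 2) := by
    convert ((((hX.pow 2).const_mul (d : ℝ)).add (hZ.pow 2)).sub (hX.const_mul 2)).add hZ
      using 2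
    norm_num
  filter_upwards [hlim.eventually (eventually_ge_nhds (by norm_num : (1 / 2 : ℝ) < 2))]
    with t ht
  nlinarith [sq_nonneg (W t)]

/-- The first integral bounds the integrand below by `-A₃W² ≥ -A₃(W²)'`, so adding `A₃W²` to the
integral makes it nondecreasing near `-∞`. -/
lemma eventually_integral_le {b c C : ℝ} {L : ℝ → ℝ} (hode : StarSystem d q X Y Z W (Iio b))
    (hC : 0 ≤ C)
    (hfirst : ∀ t < b,
      (d : ℝ) * X t^2 + A2 d * Y t^2 + Z t^2 - A3 d q * W t^2 = 1 - C * L t^2)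
    (hX : Tendsto X atBot (𝓝 0)) (hZ : Tendsto Z atBot (𝓝 1)) (hc : c < b) :
    ∃ B, ∀ᶠ t in atBot, ∫ s in c..t, (1 - ((d : ℝ) * X s^2 + Z s^2)) ≤ B := by
  obtain ⟨T, hT⟩ := eventually_atBot.1 (eventually_sq_le_deriv_sq_W (W := W) hX hZ)
  have hs : min T c < b := (min_le_right T c).trans_lt hc
  have hA2 : 0 ≤ A2 d := by unfold A2; positivity
  have hA3 : 0 ≤ A3 d q := by unfold A3; positivity
  set F := fun t => (∫ s in c..t, (1 - ((d : ℝ) * X s^2 + Z s^2))) + A3 d q * W t^2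
  have hF : MonotoneOn F (Iic (min T c)) := by
    refine monotoneOn_of_hasDerivAt_nonneg (convex_Iic _)
      (f' := fun t => 1 - ((d : ℝ) * X t^2 + Z t^2) +
        A3 d q * (2 * W t * (W t * ((d : ℝ) * X t^2 + Z t^2 - 2 * X t + Z t))))
      (fun t ht => ?_) (fun t ht => ?_)
    · have htb : t < b := ht.trans_lt hs
      refine (hasDerivAt_integral_of_continuousOn_Iio
        hode.continuousOn_one_sub_dX_sq_add_Z_sq hc htb).add
        ((((hode t htb).2.2.2.pow 2).const_mul (A3 d q)).congr_deriv ?_)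
      push_cast
      ring
    · have hWT := mul_le_mul_of_nonneg_left (hT t (ht.trans (min_le_left T c))) hA3
      nlinarith [hfirst t (ht.trans_lt hs), mul_nonneg hA2 (sq_nonneg (Y t)),
        mul_nonneg hC (sq_nonneg (L t))]
  refine ⟨F (min T c), eventually_atBot.2 ⟨min T c, fun t ht => ?_⟩⟩
  have hFt := hF ht self_mem_Iic ht
  nlinarith [mul_nonneg hA3 (sq_nonneg (W t))]

end StarSystem

theorem stmt15_general (d : ℕ) (hd : 2 ≤ d) (q : ℝ) (tmax : ℝ) (X Y Z W g : ℝ → ℝ)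
    (hode : StarSystem d q X Y Z W (Set.Iio tmax))
    (hlimX : Tendsto X atBot (𝓝 0))
    (hlimZ : Tendsto Z atBot (𝓝 1))
    (C : ℝ) (hC : 0 < C)
    (hfirst : ∀ t < tmax,
      (d : ℝ) * X t^2 + A2 d * Y t^2 + Z t^2 - A3 d q * W t^2 = 1 - C * (g t * Y t)^2) :
    ∀ t < tmax, (d : ℝ) * X t + Z t ≤ 1 := by
  intro t₁ ht₁
  by_contra! hcon
  set u : ℝ → ℝ := fun t => 1 - ((d : ℝ) * X t + Z t)
  have hmono := monotoneOn_mul_exp_integral hode.continuousOn_one_sub_dX_sq_add_Z_sq ht₁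
    (fun t ht => hode.hasDerivAt_one_sub_dX_add_Z (by omega) ht (hfirst t ht))
    (fun t _ => by positivity)
  obtain ⟨B, hB⟩ := hode.eventually_integral_le hC.le hfirst hlimX hlimZ ht₁
  have hu : Tendsto u atBot (𝓝 0) := by
    convert tendsto_const_nhds.sub ((hlimX.const_mul (d : ℝ)).add hlimZ) using 2
    simp
  have hneg : u t₁ * exp (-B) < 0 := mul_neg_of_neg_of_pos (by linarith) (exp_pos _)
  obtain ⟨t, ht, hBt, hut⟩ := ((eventually_le_atBot t₁).and
    (hB.and (hu.eventually (eventually_gt_nhds hneg)))).exists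
  have hle := hmono (ht.trans_lt ht₁) ht₁ ht
  simp only [intervalIntegral.integral_same, exp_zero, mul_one] at hle
  linarith [le_mul_exp_neg_of_mul_exp_le hle (by linarith) hBt]

/-- Under the hypotheses of the first-integral setup, `d·X(t) + Z(t) ≤ 1` for all
`t ∈ (−∞, t_max)`. -/
theorem stmt15 (d : ℕ) (hd : 2 ≤ d) (q : ℝ) (tmax : ℝ) (X Y Z W g : ℝ → ℝ)
    (hode : StarSystem d q X Y Z W (Set.Iio tmax))
    (hY : ∀ t < tmax, 0 < Y t) (hW : ∀ t < tmax, 0 < W t)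
    (hlimX : Tendsto X atBot (𝓝 0)) (hlimY : Tendsto Y atBot (𝓝 0))
    (hlimZ : Tendsto Z atBot (𝓝 1)) (hlimW : Tendsto W atBot (𝓝 0))
    (t0 g0 : ℝ) (ht0 : t0 < tmax) (hg0 : 0 < g0) (hgt0 : g t0 = g0)
    (hgode : ∀ t < tmax, HasDerivAt g (g t * X t) t)
    (C : ℝ) (hC : 0 < C)
    (hfirst : ∀ t < tmax,
      (d : ℝ) * X t^2 + A2 d * Y t^2 + Z t^2 - A3 d q * W t^2 = 1 - C * (g t * Y t)^2) :
    ∀ t < tmax, (d : ℝ) * X t + Z t ≤ 1 :=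
  stmt15_general d hd q tmax X Y Z W g hode hlimX hlimZ C hC hfirst
end
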